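/- arXiv:2211.06092 — 3 statements merged into one kernel-verified Lean document; each statement's English description precedes it below -/
import Mathlib

section
/- If a sequence H : ℕ → ℕ satisfies the recurrence H(n) = H(n - H(n-2)) + H(n - H(n-3)) for all sufficiently large n, all arguments appearing in the recursion are positive, and the limit of H(n)/n as n → ∞ exists and equals some real number L with 0 < L < 1, then L = 1/2. -/
open Filter Topology

/-!
Writing `H n ≈ L n`, the recursion arguments satisfy `n - H (n - k) ≈ (1 - L) n` for `k = 2, 3`,
so the recurrence gives `L n ≈ 2 L (1 - L) n`. Since `L ≠ 0`, this forces `1 = 2 (1 - L)`.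
-/

theorem tendsto_natCast_sub_div_self {g : ℕ → ℕ} {a : ℝ} (hg : ∀ᶠ n in atTop, g n ≤ n)
    (hga : Tendsto (fun n : ℕ => (g n : ℝ) / n) atTop (𝓝 a)) :
    Tendsto (fun n : ℕ => ((n - g n : ℕ) : ℝ) / n) atTop (𝓝 (1 - a)) := by
  refine (tendsto_const_nhds.sub hga).congr' ?_
  filter_upwards [hg, eventually_gt_atTop 0] with n hgn hn
  have hn' : (n : ℝ) ≠ 0 := by positivity
  rw [Nat.cast_sub hgn, sub_div, div_self hn']

theorem tendsto_comp_div_self {H d : ℕ → ℕ} {L c : ℝ}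
    (hH : Tendsto (fun n : ℕ => (H n : ℝ) / n) atTop (𝓝 L))
    (hd : Tendsto (fun n : ℕ => (d n : ℝ) / n) atTop (𝓝 c)) (hc : 0 < c) :
    Tendsto (fun n : ℕ => (H (d n) : ℝ) / n) atTop (𝓝 (L * c)) := by
  have hd_top : Tendsto d atTop atTop := by
    rw [← tendsto_natCast_atTop_iff (R := ℝ)]
    refine (tendsto_natCast_atTop_atTop.atTop_mul_pos hc hd).congr' ?_
    filter_upwards [eventually_gt_atTop 0] with n hn
    field_simp
  refine ((hH.comp hd_top).mul hd).congr' ?_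
  filter_upwards [hd_top.eventually (eventually_gt_atTop 0), eventually_gt_atTop 0]
    with n hdn hn
  have hdn' : (d n : ℝ) ≠ 0 := by positivity
  simp only [Function.comp_apply]
  field_simp

theorem tendsto_comp_sub_div_self {H : ℕ → ℕ} {L : ℝ}
    (hH : Tendsto (fun n : ℕ => (H n : ℝ) / n) atTop (𝓝 L)) (k : ℕ) :
    Tendsto (fun n : ℕ => (H (n - k) : ℝ) / n) atTop (𝓝 L) := by
  have hk : Tendsto (fun n : ℕ => ((n - k : ℕ) : ℝ) / n) atTop (𝓝 1) := by
    simpa using tendsto_natCast_sub_div_self (eventually_ge_atTop k)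
      (tendsto_const_div_atTop_nhds_zero_nat (k : ℝ))
  simpa using tendsto_comp_div_self hH hk one_pos

theorem tendsto_comp_sub_comp_sub_div_self {H : ℕ → ℕ} {L : ℝ}
    (hH : Tendsto (fun n : ℕ => (H n : ℝ) / n) atTop (𝓝 L)) (hL : L < 1) (k : ℕ)
    (hle : ∀ᶠ n in atTop, H (n - k) ≤ n) :
    Tendsto (fun n : ℕ => (H (n - H (n - k)) : ℝ) / n) atTop (𝓝 (L * (1 - L))) :=
  tendsto_comp_div_self hH
    (tendsto_natCast_sub_div_self hle (tendsto_comp_sub_div_self hH k)) (by linarith)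

/-- If H satisfies H(n)=H(n-H(n-2))+H(n-H(n-3)) eventually, the recursion arguments stay
positive, and H(n)/n → L with 0 < L < 1, then L = 1/2. -/
theorem H_limit_is_half (H : ℕ → ℕ) (N : ℕ) (L : ℝ)
    (hrec : ∀ n, N ≤ n → H n = H (n - H (n - 2)) + H (n - H (n - 3)))
    (hargs : ∀ n, N ≤ n →
      (1 ≤ H (n - 2) ∧ H (n - 2) ≤ n - 1) ∧ (1 ≤ H (n - 3) ∧ H (n - 3) ≤ n - 1))
    (hlim : Tendsto (fun n : ℕ => (H n : ℝ) / n) atTop (nhds L))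
    (hL0 : 0 < L) (hL1 : L < 1) :
    L = 1 / 2 := by
  have hle2 : ∀ᶠ n in atTop, H (n - 2) ≤ n := by
    filter_upwards [eventually_ge_atTop N] with n hn
    exact (hargs n hn).1.2.trans (Nat.sub_le n 1)
  have hle3 : ∀ᶠ n in atTop, H (n - 3) ≤ n := by
    filter_upwards [eventually_ge_atTop N] with n hn
    exact (hargs n hn).2.2.trans (Nat.sub_le n 1)
  have hfixed : L = L * (1 - L) + L * (1 - L) := by
    refine tendsto_nhds_unique hlim (((tendsto_comp_sub_comp_sub_div_self hlim hL1 2 hle2).add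
      (tendsto_comp_sub_comp_sub_div_self hlim hL1 3 hle3)).congr' ?_)
    filter_upwards [eventually_ge_atTop N] with n hn
    rw [hrec n hn, Nat.cast_add, add_div]
  have hL : L * (2 * L - 1) = 0 := by linear_combination hfixed
  linarith [(mul_eq_zero.mp hL).resolve_left hL0.ne']
end

section
/- If a sequence Q : ℕ → ℕ satisfies Q(n) = Σ_{i=1}^{ℓ} Q(n − Q(n−i)) for all large n (with ℓ ≥ 2 fixed and all arguments positive), and Q(n)/n converges to a limit L ∈ (0,1), then L = (ℓ−1)/ℓ. -/
open Filter Finset Topology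

/-! Dividing the recurrence by `n`: since `Q(n - i) ~ L n`, the argument `n - Q(n - i)` grows
like `(1 - L) n`, so each summand `Q(n - Q(n - i))` is asymptotic to `L (1 - L) n`. Passing to
the limit gives `L = ℓ L (1 - L)`, and `L ≠ 0` leaves `ℓ (1 - L) = 1`. -/

theorem tendsto_atTop_of_tendsto_div_natCast {g : ℕ → ℕ} {c : ℝ} (hc : 0 < c)
    (hg : Tendsto (fun n : ℕ => (g n : ℝ) / n) atTop (𝓝 c)) : Tendsto g atTop atTop := by
  rw [← tendsto_natCast_atTop_iff (R := ℝ)]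
  refine (hg.pos_mul_atTop hc tendsto_natCast_atTop_atTop).congr' ?_
  filter_upwards [eventually_ne_atTop 0] with n hn
  field_simp

theorem tendsto_comp_div_natCast {f : ℕ → ℝ} {g : ℕ → ℕ} {a c : ℝ}
    (hf : Tendsto (fun n : ℕ => f n / n) atTop (𝓝 a))
    (hg : Tendsto (fun n : ℕ => (g n : ℝ) / n) atTop (𝓝 c)) (hc : 0 < c) :
    Tendsto (fun n : ℕ => f (g n) / n) atTop (𝓝 (a * c)) := by
  have hg_top := tendsto_atTop_of_tendsto_div_natCast hc hg
  refine ((hf.comp hg_top).mul hg).congr' ?_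
  filter_upwards [hg_top.eventually_ne_atTop 0, eventually_ne_atTop 0] with n hgn hn
  simp only [Function.comp_apply]
  field_simp

theorem tendsto_natCast_sub_div {h : ℕ → ℕ} {a : ℝ}
    (hh : Tendsto (fun n : ℕ => (h n : ℝ) / n) atTop (𝓝 a)) (hle : ∀ᶠ n in atTop, h n ≤ n) :
    Tendsto (fun n : ℕ => ((n - h n : ℕ) : ℝ) / n) atTop (𝓝 (1 - a)) := by
  refine (tendsto_const_nhds.sub hh).congr' ?_
  filter_upwards [hle, eventually_ne_atTop 0] with n hhn hn
  rw [Nat.cast_sub hhn]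
  field_simp

theorem Q_sum_limit_general (ℓ : ℕ) (Q : ℕ → ℕ) (N : ℕ) (L : ℝ)
    (hrec : ∀ n, N ≤ n → Q n = ∑ i ∈ Finset.Icc 1 ℓ, Q (n - Q (n - i)))
    (hargs : ∀ n, N ≤ n → ∀ i ∈ Finset.Icc 1 ℓ, 1 ≤ Q (n - i) ∧ Q (n - i) ≤ n - 1)
    (hlim : Tendsto (fun n : ℕ => (Q n : ℝ) / n) atTop (nhds L))
    (hL0 : 0 < L) (hL1 : L < 1) :
    L = ((ℓ : ℝ) - 1) / ℓ := by
  have hshift (i : ℕ) : Tendsto (fun n : ℕ => (Q (n - i) : ℝ) / n) atTop (𝓝 L) := by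
    have hsub := tendsto_natCast_sub_div (h := fun _ => i)
      (tendsto_const_div_atTop_nhds_zero_nat (i : ℝ)) (eventually_ge_atTop i)
    simpa using tendsto_comp_div_natCast (f := fun n => (Q n : ℝ)) hlim hsub (by norm_num)
  have hterm (i : ℕ) (hi : i ∈ Icc 1 ℓ) :
      Tendsto (fun n : ℕ => (Q (n - Q (n - i)) : ℝ) / n) atTop (𝓝 (L * (1 - L))) := by
    have hle : ∀ᶠ n in atTop, Q (n - i) ≤ n := by
      filter_upwards [eventually_ge_atTop N] with n hn
      exact (hargs n hn i hi).2.trans (Nat.sub_le n 1)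
    exact tendsto_comp_div_natCast (f := fun n => (Q n : ℝ)) hlim
      (tendsto_natCast_sub_div (hshift i) hle) (sub_pos.2 hL1)
  have hsum : Tendsto (fun n : ℕ => (Q n : ℝ) / n) atTop (𝓝 (ℓ * (L * (1 - L)))) := by
    refine (tendsto_finsetSum _ hterm).congr' ?_ |>.trans_eq (by simp)
    filter_upwards [eventually_ge_atTop N] with n hn
    rw [hrec n hn, Nat.cast_sum, Finset.sum_div]
  have hfix : (ℓ : ℝ) * (1 - L) = 1 :=
    mul_left_cancel₀ hL0.ne' (by linarith [tendsto_nhds_unique hlim hsum])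
  have hℓ : (ℓ : ℝ) ≠ 0 := left_ne_zero_of_mul_eq_one hfix
  field_simp
  linarith

/-- If Q satisfies Q(n) = Σ_{i=1}^ℓ Q(n - Q(n-i)) eventually, with positive arguments,
and Q(n)/n → L ∈ (0,1), then L = (ℓ-1)/ℓ. -/
theorem Q_sum_limit (ℓ : ℕ) (hℓ : 2 ≤ ℓ) (Q : ℕ → ℕ) (N : ℕ) (L : ℝ)
    (hrec : ∀ n, N ≤ n → Q n = ∑ i ∈ Finset.Icc 1 ℓ, Q (n - Q (n - i)))
    (hargs : ∀ n, N ≤ n → ∀ i ∈ Finset.Icc 1 ℓ, 1 ≤ Q (n - i) ∧ Q (n - i) ≤ n - 1)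
    (hlim : Tendsto (fun n : ℕ => (Q n : ℝ) / n) atTop (nhds L))
    (hL0 : 0 < L) (hL1 : L < 1) :
    L = ((ℓ : ℝ) - 1) / ℓ :=
  Q_sum_limit_general ℓ Q N L hrec hargs hlim hL0 hL1
end

section
/- The Hofstadter–Conway sequence defined by c(1)=c(2)=1 and c(n)=c(c(n-1))+c(n-c(n-1)) for n≥3 satisfies 1 ≤ c(n) ≤ n for all n ≥ 1, c(n+1)−c(n) ∈ {0,1} for all n ≥ 1, and c(2^k) = 2^{k-1} for k = 1, 2, 3, 4. -/
/-! Strong induction on `n`. Since `k := c (n - 1)` lies in `[1, n - 1]`, the recursion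
`c n = c k + c (n - k)` only calls `c` at smaller positive arguments, which gives
`1 ≤ c n ≤ n`. For the slope, `c n - c (n - 1) ∈ {0, 1}` means that passing from `n` to `n + 1`
advances exactly one of the two arguments `k`, `n - k` by one, and the slope at that smaller
argument is again `0` or `1`. -/

structure IsHofstadterConway (c : ℕ → ℕ) : Prop where
  one : c 1 = 1
  two : c 2 = 1
  recurrence : ∀ n, 3 ≤ n → c n = c (c (n - 1)) + c (n - c (n - 1))

namespace IsHofstadterConway

variable {c : ℕ → ℕ}

theorem apply_succ (hc : IsHofstadterConway c) {n : ℕ} (hn : 2 ≤ n) :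
    c (n + 1) = c (c n) + c (n + 1 - c n) := by
  simpa only [Nat.add_sub_cancel] using hc.recurrence (n + 1) (by omega)

theorem apply_succ_eq_add (hc : IsHofstadterConway c) {n a b d : ℕ}
    (ha : c n = a) (hb : c a = b) (hd : c (n + 1 - a) = d) (hn : 2 ≤ n) : c (n + 1) = b + d := by
  rw [hc.apply_succ hn, ha, hb, hd]

theorem one_le_and_le_self (hc : IsHofstadterConway c) {n : ℕ} (hn : 1 ≤ n) :
    1 ≤ c n ∧ c n ≤ n := by
  induction n using Nat.strong_induction_on with
  | _ n ih =>
    rcases (by omega : n = 1 ∨ n = 2 ∨ 3 ≤ n) with rfl | rfl | hn3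
    · simp [hc.one]
    · simp [hc.two]
    · obtain ⟨hk1, hkn⟩ := ih (n - 1) (by omega) (by omega)
      have hck := ih (c (n - 1)) (by omega) hk1
      have hcnk := ih (n - c (n - 1)) (by omega) (by omega)
      rw [hc.recurrence n hn3]
      omega

theorem succ_eq_or_eq_add_one (hc : IsHofstadterConway c) {n : ℕ} (hn : 1 ≤ n) :
    c (n + 1) = c n ∨ c (n + 1) = c n + 1 := by
  induction n using Nat.strong_induction_on with
  | _ n ih =>
    rcases (by omega : n = 1 ∨ n = 2 ∨ 3 ≤ n) with rfl | rfl | hn3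
    · simp [hc.one, hc.two]
    · right
      rw [hc.apply_succ_eq_add hc.two hc.one hc.two le_rfl, hc.two]
    · obtain ⟨k, hk⟩ : ∃ k, c (n - 1) = k := ⟨_, rfl⟩
      obtain ⟨hk1, hkn⟩ := hk ▸ hc.one_le_and_le_self (n := n - 1) (by omega)
      have hcn : c n = c k + c (n - k) := hk ▸ hc.recurrence n hn3
      have hcn1 := hc.apply_succ (n := n) (by omega)
      rcases hk ▸ Nat.sub_add_cancel (by omega : 1 ≤ n) ▸ ih (n - 1) (by omega) (by omega)
        with hstay | hrise
      · rw [hstay, show n + 1 - k = n - k + 1 by omega] at hcn1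
        rcases ih (n - k) (by omega) (by omega) with h | h <;> omega
      · rw [hrise, show n + 1 - (k + 1) = n - k by omega] at hcn1
        rcases ih k (by omega) hk1 with h | h <;> omega

theorem apply_four_eight_sixteen (hc : IsHofstadterConway c) :
    c 4 = 2 ∧ c 8 = 4 ∧ c 16 = 8 := by
  have c1 := hc.one
  have c2 := hc.two
  have c3 : c 3 = 2 := hc.apply_succ_eq_add c2 c1 c2 (by norm_num)
  have c4 : c 4 = 2 := hc.apply_succ_eq_add c3 c2 c2 (by norm_num)
  have c5 : c 5 = 3 := hc.apply_succ_eq_add c4 c2 c3 (by norm_num)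
  have c6 : c 6 = 4 := hc.apply_succ_eq_add c5 c3 c3 (by norm_num)
  have c7 : c 7 = 4 := hc.apply_succ_eq_add c6 c4 c3 (by norm_num)
  have c8 : c 8 = 4 := hc.apply_succ_eq_add c7 c4 c4 (by norm_num)
  have c9 : c 9 = 5 := hc.apply_succ_eq_add c8 c4 c5 (by norm_num)
  have c10 : c 10 = 6 := hc.apply_succ_eq_add c9 c5 c5 (by norm_num)
  have c11 : c 11 = 7 := hc.apply_succ_eq_add c10 c6 c5 (by norm_num)
  have c12 : c 12 = 7 := hc.apply_succ_eq_add c11 c7 c5 (by norm_num)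
  have c13 : c 13 = 8 := hc.apply_succ_eq_add c12 c7 c6 (by norm_num)
  have c14 : c 14 = 8 := hc.apply_succ_eq_add c13 c8 c6 (by norm_num)
  have c15 : c 15 = 8 := hc.apply_succ_eq_add c14 c8 c7 (by norm_num)
  have c16 : c 16 = 8 := hc.apply_succ_eq_add c15 c8 c8 (by norm_num)
  exact ⟨c4, c8, c16⟩

end IsHofstadterConway

/-- The Hofstadter–Conway sequence: 1 ≤ c(n) ≤ n, successive differences 0 or 1,
and c(2^k) = 2^(k-1) for k = 1,2,3,4. -/
theorem conway_properties (c : ℕ → ℕ)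
    (h1 : c 1 = 1) (h2 : c 2 = 1)
    (hrec : ∀ n, 3 ≤ n → c n = c (c (n - 1)) + c (n - c (n - 1))) :
    (∀ n, 1 ≤ n → 1 ≤ c n ∧ c n ≤ n) ∧
    (∀ n, 1 ≤ n → c (n + 1) = c n ∨ c (n + 1) = c n + 1) ∧
    (c 2 = 1 ∧ c 4 = 2 ∧ c 8 = 4 ∧ c 16 = 8) := by
  have hc : IsHofstadterConway c := ⟨h1, h2, hrec⟩
  exact ⟨fun _ hn => hc.one_le_and_le_self hn, fun _ hn => hc.succ_eq_or_eq_add_one hn,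
    h2, hc.apply_four_eight_sixteen⟩
end
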